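/- For any α ≥ 2, ∫_{ℝ²} 2α² |y|^{α-2}/(1+|y|^α)² · (1-|y|^α)/(1+|y|^α) · ln|y| dy = -4π. -/

import Mathlib

/-!
In polar coordinates the integral is `2π ∫₀^∞ r f(r) dr` with `f` the radial integrand, and the
substitution `u = r^α` turns `r f(r) dr` into `g(u) du` with `g(u) = 2(1 - u) log u / (1 + u)³`,
independently of `α`. The function `g` has the explicit primitive
`G(u) = 2(u log u / (1 + u)² + 1 / (1 + u))`, which goes from `G(0) = 2` to `G(∞) = 0`, so
`∫₀^∞ g = -2` and the integral equals `2π · (-2) = -4π`.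
-/

open Real MeasureTheory

open Set Filter Topology

theorem integral_fun_norm_euclideanSpace_fin_two {F : Type*} [NormedAddCommGroup F]
    [NormedSpace ℝ F] (f : ℝ → F) :
    ∫ y : EuclideanSpace ℝ (Fin 2), f ‖y‖ = (2 * π) • ∫ r in Ioi (0 : ℝ), r • f r := by
  rw [integral_fun_norm_addHaar, finrank_euclideanSpace_fin, measureReal_def,
    EuclideanSpace.volume_ball_fin_two]
  simp [ENNReal.toReal_ofReal pi_nonneg, mul_smul, ofNat_smul_eq_nsmul (R := ℝ)]

noncomputable def logProfile (u : ℝ) : ℝ := 2 * (1 - u) * log u / (1 + u) ^ 3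

noncomputable def logProfilePrimitive (u : ℝ) : ℝ := 2 * (u * log u / (1 + u) ^ 2 + 1 / (1 + u))

lemma hasDerivAt_logProfilePrimitive {u : ℝ} (hu : 0 < u) :
    HasDerivAt logProfilePrimitive (logProfile u) u := by
  have hu1 : 1 + u ≠ 0 := by positivity
  have hmulLog : HasDerivAt (fun u ↦ u * log u) (log u + 1) u := by
    simpa [hu.ne'] using (hasDerivAt_id' u).fun_mul (hasDerivAt_log hu.ne')
  have hsq : HasDerivAt (fun u : ℝ ↦ (1 + u) ^ 2) (2 * (1 + u)) u := by
    simpa using ((hasDerivAt_id u).const_add 1).fun_pow 2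
  have hinv : HasDerivAt (fun u : ℝ ↦ 1 / (1 + u)) (-1 / (1 + u) ^ 2) u := by
    simpa [one_div] using ((hasDerivAt_id u).const_add 1).fun_inv hu1
  refine (((hmulLog.div hsq (pow_ne_zero 2 hu1)).add hinv).const_mul 2).congr_deriv ?_
  unfold logProfile
  field_simp
  ring

lemma logProfile_nonpos {u : ℝ} (hu : 0 < u) : logProfile u ≤ 0 := by
  have hsign : (1 - u) * log u ≤ 0 := by
    rcases le_or_gt u 1 with h | h
    · exact mul_nonpos_of_nonneg_of_nonpos (by linarith) (log_nonpos hu.le h)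
    · exact mul_nonpos_of_nonpos_of_nonneg (by linarith) (log_nonneg h.le)
  unfold logProfile
  rw [mul_assoc]
  exact div_nonpos_of_nonpos_of_nonneg (by linarith) (by positivity)

lemma continuousAt_logProfilePrimitive_zero : ContinuousAt logProfilePrimitive 0 := by
  unfold logProfilePrimitive
  exact continuousAt_const.mul
    ((continuous_mul_log.continuousAt.div (by fun_prop) (by norm_num)).add
      (continuousAt_const.div (by fun_prop) (by norm_num)))

lemma tendsto_logProfilePrimitive_atTop : Tendsto logProfilePrimitive atTop (𝓝 0) := by
  have hlog : Tendsto (fun u ↦ log u / (1 + u)) atTop (𝓝 0) := by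
    simpa [add_comm] using tendsto_pow_log_div_mul_add_atTop 1 1 1 one_ne_zero
  have hmulLog : Tendsto (fun u ↦ u * log u / (1 + u) ^ 2) atTop (𝓝 0) := by
    refine tendsto_of_tendsto_of_tendsto_of_le_of_le' tendsto_const_nhds hlog ?_ ?_ <;>
      filter_upwards [eventually_ge_atTop 1] with u hu
    · have := log_nonneg hu
      positivity
    · rw [div_le_div_iff₀ (by positivity) (by positivity)]
      nlinarith [log_nonneg hu]
  have hinv : Tendsto (fun u : ℝ ↦ 1 / (1 + u)) atTop (𝓝 0) := by
    simpa [Function.comp_def] using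
      tendsto_inv_atTop_zero.comp (tendsto_atTop_add_const_left atTop 1 tendsto_id)
  unfold logProfilePrimitive
  simpa using (hmulLog.add hinv).const_mul 2

lemma integral_logProfile : ∫ u in Ioi (0 : ℝ), logProfile u = -2 := by
  rw [integral_Ioi_of_hasDerivAt_of_nonpos
    continuousAt_logProfilePrimitive_zero.continuousWithinAt
    (fun _ hu ↦ hasDerivAt_logProfilePrimitive hu) (fun _ hu ↦ logProfile_nonpos hu)
    tendsto_logProfilePrimitive_atTop]
  norm_num [logProfilePrimitive]

lemma mul_radialIntegrand_eq_logProfile_rpow (α : ℝ) {r : ℝ} (hr : 0 < r) :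
    r * (2 * α ^ 2 * r ^ (α - 2) / (1 + r ^ α) ^ 2 * ((1 - r ^ α) / (1 + r ^ α)) * log r) =
      α * r ^ (α - 1) * logProfile (r ^ α) := by
  rw [logProfile, log_rpow hr, show α - 1 = α - 2 + 1 by ring, rpow_add hr, rpow_one]
  field_simp

theorem stmt_4 (α : ℝ) (hα : 2 ≤ α) :
    (∫ y : EuclideanSpace ℝ (Fin 2),
        2 * α ^ 2 * ‖y‖ ^ (α - 2) / (1 + ‖y‖ ^ α) ^ 2 *
          ((1 - ‖y‖ ^ α) / (1 + ‖y‖ ^ α)) * Real.log ‖y‖) = -(4 * Real.pi) := by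
  have hα0 : 0 < α := by linarith
  rw [integral_fun_norm_euclideanSpace_fin_two
    (fun r ↦ 2 * α ^ 2 * r ^ (α - 2) / (1 + r ^ α) ^ 2 * ((1 - r ^ α) / (1 + r ^ α)) * log r)]
  have hsubst : ∫ r in Ioi (0 : ℝ), r • (2 * α ^ 2 * r ^ (α - 2) / (1 + r ^ α) ^ 2 *
        ((1 - r ^ α) / (1 + r ^ α)) * log r) =
      ∫ r in Ioi (0 : ℝ), (|α| * r ^ (α - 1)) • logProfile (r ^ α) :=
    setIntegral_congr_fun measurableSet_Ioi fun r hr ↦ by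
      rw [abs_of_pos hα0, smul_eq_mul, smul_eq_mul, mul_radialIntegrand_eq_logProfile_rpow α hr]
  rw [hsubst, integral_comp_rpow_Ioi logProfile hα0.ne', integral_logProfile, smul_eq_mul]
  ring
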